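/- With Kraus operators (K_i), an orthonormal Hermitian basis (σ_μ) containing σ₀ = I/√d_A, an orthogonal projection P of rank d_S, and R_μ = P(∑_i K_i† σ_μ K_i)P as in the context: if d_S > 1, then max_{u ∈ {1,…,5}} |β_u| < max_{i,j ∈ {1,2}} |α_i · α_j| (strict inequality). -/

import Mathlib

open Matrix Finset

/-- Real part of the trace of a complex matrix (the traces in question are real
for Hermitian matrices). -/
noncomputable def rtr {α : Type} [Fintype α] (M : Matrix α α ℂ) : ℝ :=
  (Matrix.trace M).re

/-- α₁ = ∑_μ (Tr R_μ)². -/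
noncomputable def alpha1 {α I : Type} [Fintype α] [Fintype I]
    (R : I → Matrix α α ℂ) : ℝ := ∑ μ, (rtr (R μ)) ^ 2

/-- α₂ = ∑_μ Tr(R_μ²). -/
noncomputable def alpha2 {α I : Type} [Fintype α] [Fintype I]
    (R : I → Matrix α α ℂ) : ℝ := ∑ μ, rtr (R μ * R μ)

/-- β₁ = ∑_{μ,ν} (Tr(R_μ R_ν))². -/
noncomputable def beta1 {α I : Type} [Fintype α] [Fintype I]
    (R : I → Matrix α α ℂ) : ℝ := ∑ μ, ∑ ν, (rtr (R μ * R ν)) ^ 2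

/-- β₂ = ∑_{μ,ν} Tr(R_μ R_ν)·Tr(R_μ)·Tr(R_ν). -/
noncomputable def beta2 {α I : Type} [Fintype α] [Fintype I]
    (R : I → Matrix α α ℂ) : ℝ := ∑ μ, ∑ ν, rtr (R μ * R ν) * rtr (R μ) * rtr (R ν)

/-- β₃ = ∑_{μ,ν} Tr(R_μ R_ν²)·Tr(R_μ). -/
noncomputable def beta3 {α I : Type} [Fintype α] [Fintype I]
    (R : I → Matrix α α ℂ) : ℝ := ∑ μ, ∑ ν, rtr (R μ * (R ν * R ν)) * rtr (R μ)

/-- β₄ = ∑_{μ,ν} Tr(R_μ² R_ν²). -/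
noncomputable def beta4 {α I : Type} [Fintype α] [Fintype I]
    (R : I → Matrix α α ℂ) : ℝ := ∑ μ, ∑ ν, rtr (R μ * R μ * (R ν * R ν))

/-- β₅ = ∑_{μ,ν} Tr(R_μ R_ν R_μ R_ν). -/
noncomputable def beta5 {α I : Type} [Fintype α] [Fintype I]
    (R : I → Matrix α α ℂ) : ℝ := ∑ μ, ∑ ν, rtr (R μ * R ν * R μ * R ν)

/-- max_{i,j ∈ {1,2}} |α_i α_j|. -/
noncomputable def maxAlpha {α I : Type} [Fintype α] [Fintype I]
    (R : I → Matrix α α ℂ) : ℝ :=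
  max (max |alpha1 R * alpha1 R| |alpha1 R * alpha2 R|)
      (max |alpha2 R * alpha1 R| |alpha2 R * alpha2 R|)

/-- max_{u ∈ {1,…,5}} |β_u|. -/
noncomputable def maxBeta {α I : Type} [Fintype α] [Fintype I]
    (R : I → Matrix α α ℂ) : ℝ :=
  max |beta1 R| (max |beta2 R| (max |beta3 R| (max |beta4 R| |beta5 R|)))

/-!
Flatten matrices into `ℂ^(n × n)`, where `⟪A, B⟫ = Tr (Aᴴ B)`. For Hermitian `R μ` one has
`α₂ = ∑ ‖R μ‖²`, `β₁ = ∑ ⟪R μ, R ν⟫²`, `β₂ = ‖X‖²` and `β₃ = ⟪X, W⟫`, `β₄ = ‖W‖² = ∑ ‖R ν R μ‖²`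
for `X = ∑ Tr (R μ) • R μ` and `W = ∑ R ν²`, while `|Tr (R μ R ν R μ R ν)| ≤ ‖R ν R μ‖²`.
Cauchy–Schwarz and submultiplicativity of the Frobenius norm give `β₁ ≤ α₂²`, `β₂ ≤ α₁ α₂`,
`|β₅| ≤ β₄ ≤ α₂²` and `β₃² ≤ β₂ β₄`, and `max (α₁, α₂)² ≤ max |αᵢ αⱼ|`.

Strictness comes from `R₀ = P / √d_A`: as `rank P > 1`, `‖R₀²‖ < ‖R₀‖²`, so `β₄ < α₂²`.
For `β₁` and `β₂`: if some `R μ` is not a multiple of `P`, Cauchy–Schwarz is strict;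
otherwise every `R μ` is a real multiple of `P`, and then `α₁ = rank P · α₂ > α₂`.
-/

open scoped InnerProductSpace

lemma LinearEquiv.map_mem_span_singleton_iff {R M N : Type*} [Semiring R] [AddCommMonoid M]
    [AddCommMonoid N] [Module R M] [Module R N] (e : M ≃ₗ[R] N) {x y : M} :
    e x ∈ R ∙ e y ↔ x ∈ R ∙ y := by
  simp only [Submodule.mem_span_singleton, ← map_smul, e.injective.eq_iff]

namespace Matrix

lemma trace_eq_rank_of_isIdempotentElem {K n : Type*} [Field K] [Fintype n]
    {P : Matrix n n K} (hP : IsIdempotentElem P) : P.trace = P.rank := by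
  classical
  have hf : IsIdempotentElem (toLin' P) := hP.map toLinAlgEquiv'
  rw [← trace_toLin'_eq, LinearMap.IsProj.trace (LinearMap.IsIdempotentElem.isProj_range _ hf)]
  rfl

lemma ne_zero_of_one_lt_rank {R m n : Type*} [CommSemiring R] [Nontrivial R] [Fintype n]
    {A : Matrix m n R} (h : 1 < A.rank) : A ≠ 0 := by
  rintro rfl
  simp at h

lemma exists_ofReal_of_isHermitian_smul {n : Type*} {P : Matrix n n ℂ}
    (hP : P.IsHermitian) (hP0 : P ≠ 0) {c : ℂ} (h : (c • P).IsHermitian) : ∃ r : ℝ, c = r := by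
  have hc : star c • P = c • P := by rw [← h.eq, conjTranspose_smul, hP.eq]
  exact Complex.conj_eq_iff_real.mp (smul_left_injective ℂ hP0 hc)

variable {𝕜 : Type*} [RCLike 𝕜] {l m n : Type*}

def flattenL2 : Matrix m n 𝕜 ≃ₗ[𝕜] EuclideanSpace 𝕜 (m × n) :=
  (LinearEquiv.curry 𝕜 𝕜 m n).symm.trans (WithLp.linearEquiv 2 𝕜 (m × n → 𝕜)).symm

@[simp]
lemma flattenL2_apply (A : Matrix m n 𝕜) (p : m × n) : flattenL2 A p = A p.1 p.2 := rfl

variable [Fintype l] [Fintype m] [Fintype n]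

lemma inner_flattenL2 (A B : Matrix m n 𝕜) :
    ⟪flattenL2 A, flattenL2 B⟫_𝕜 = trace (Aᴴ * B) := by
  simp only [PiLp.inner_apply, RCLike.inner_apply, flattenL2_apply, trace, diag, mul_apply,
    conjTranspose_apply, Fintype.sum_prod_type]
  rw [Finset.sum_comm]
  simp [mul_comm]

section frobenius

attribute [local instance] frobeniusSeminormedAddCommGroup

lemma norm_flattenL2 (A : Matrix m n 𝕜) : ‖flattenL2 A‖ = ‖A‖ := by
  simp [EuclideanSpace.norm_eq, frobenius_norm_def, Real.sqrt_eq_rpow, Fintype.sum_prod_type]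

lemma norm_flattenL2_mul_le (A : Matrix l m 𝕜) (B : Matrix m n 𝕜) :
    ‖flattenL2 (A * B)‖ ≤ ‖flattenL2 A‖ * ‖flattenL2 B‖ := by
  simpa only [norm_flattenL2] using frobenius_norm_mul A B

lemma norm_flattenL2_conjTranspose (A : Matrix m n 𝕜) : ‖flattenL2 Aᴴ‖ = ‖flattenL2 A‖ := by
  simpa only [norm_flattenL2] using frobenius_norm_conjTranspose A

end frobenius

end Matrix

section CauchySchwarz

variable {𝕜 E : Type*} [RCLike 𝕜] [NormedAddCommGroup E] [InnerProductSpace 𝕜 E]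

open RCLike

lemma re_inner_sq_le (x y : E) : re ⟪x, y⟫_𝕜 ^ 2 ≤ ‖x‖ ^ 2 * ‖y‖ ^ 2 := by
  rw [← mul_pow, ← sq_abs]
  exact pow_le_pow_left₀ (abs_nonneg _) ((abs_re_le_norm _).trans (norm_inner_le_norm x y)) 2

lemma re_inner_sq_lt {x y : E} (hx : x ≠ 0) (hy : y ∉ 𝕜 ∙ x) :
    re ⟪x, y⟫_𝕜 ^ 2 < ‖x‖ ^ 2 * ‖y‖ ^ 2 := by
  have hcase : ‖⟪x, y⟫_𝕜‖ = ‖x‖ * ‖y‖ ↔ x = 0 ∨ y ∈ 𝕜 ∙ x :=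
    (norm_inner_eq_norm_tfae 𝕜 x y).out 0 3
  have hlt : ‖⟪x, y⟫_𝕜‖ < ‖x‖ * ‖y‖ :=
    (norm_inner_le_norm x y).lt_of_ne fun h => (hcase.mp h).elim hx hy
  rw [← mul_pow, ← sq_abs]
  exact pow_lt_pow_left₀ ((abs_re_le_norm _).trans_lt hlt) (abs_nonneg _) two_ne_zero

lemma notMem_span_singleton_or_notMem_span_singleton {x y z : E} (hx : x ≠ 0)
    (hy : y ∉ 𝕜 ∙ x) : x ∉ 𝕜 ∙ z ∨ y ∉ 𝕜 ∙ z := by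
  by_contra! h
  obtain ⟨⟨a, rfl⟩, ⟨b, rfl⟩⟩ :=
    h.imp Submodule.mem_span_singleton.mp Submodule.mem_span_singleton.mp
  have ha : a ≠ 0 := by rintro rfl; simp at hx
  exact hy (Submodule.mem_span_singleton.mpr ⟨b / a, by rw [smul_smul, div_mul_cancel₀ _ ha]⟩)

end CauchySchwarz

section GramSums

variable {𝕜 E ι : Type*} [RCLike 𝕜] [NormedAddCommGroup E] [InnerProductSpace 𝕜 E] [Fintype ι]
  (v : ι → E)

open RCLike

lemma re_inner_sum_smul_right (a : ι → ℝ) (x : E) :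
    re ⟪x, ∑ μ, (a μ : 𝕜) • v μ⟫_𝕜 = ∑ μ, a μ * re ⟪x, v μ⟫_𝕜 := by
  simp [inner_sum, inner_smul_right]

lemma sum_sum_re_inner_sq_le : ∑ μ, ∑ ν, re ⟪v μ, v ν⟫_𝕜 ^ 2 ≤ (∑ μ, ‖v μ‖ ^ 2) ^ 2 := by
  rw [sq (∑ μ, _), Finset.sum_mul_sum]
  exact Finset.sum_le_sum fun μ _ => Finset.sum_le_sum fun ν _ => re_inner_sq_le _ _

lemma sum_sum_re_inner_sq_lt {i j : ι} (hi : v i ≠ 0) (hj : v j ∉ 𝕜 ∙ v i) :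
    ∑ μ, ∑ ν, re ⟪v μ, v ν⟫_𝕜 ^ 2 < (∑ μ, ‖v μ‖ ^ 2) ^ 2 := by
  rw [sq (∑ μ, _), Finset.sum_mul_sum]
  refine Finset.sum_lt_sum (fun μ _ => Finset.sum_le_sum fun ν _ => re_inner_sq_le _ _)
    ⟨i, Finset.mem_univ _, ?_⟩
  exact Finset.sum_lt_sum (fun ν _ => re_inner_sq_le _ _)
    ⟨j, Finset.mem_univ _, re_inner_sq_lt hi hj⟩

lemma norm_sum_smul_sq_le (a : ι → ℝ) :
    ‖∑ μ, (a μ : 𝕜) • v μ‖ ^ 2 ≤ (∑ μ, a μ ^ 2) * ∑ μ, ‖v μ‖ ^ 2 := by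
  have htri : ‖∑ μ, (a μ : 𝕜) • v μ‖ ≤ ∑ μ, |a μ| * ‖v μ‖ :=
    (norm_sum_le _ _).trans_eq (by simp [norm_smul])
  calc ‖∑ μ, (a μ : 𝕜) • v μ‖ ^ 2 ≤ (∑ μ, |a μ| * ‖v μ‖) ^ 2 :=
        pow_le_pow_left₀ (norm_nonneg _) htri 2
    _ ≤ (∑ μ, |a μ| ^ 2) * ∑ μ, ‖v μ‖ ^ 2 := Finset.sum_mul_sq_le_sq_mul_sq _ _ _
    _ = (∑ μ, a μ ^ 2) * ∑ μ, ‖v μ‖ ^ 2 := by simp_rw [sq_abs]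

lemma norm_sum_smul_sq_lt (a : ι → ℝ) {i j k : ι} (hk : a k ≠ 0) (hi : v i ≠ 0)
    (hj : v j ∉ 𝕜 ∙ v i) :
    ‖∑ μ, (a μ : 𝕜) • v μ‖ ^ 2 < (∑ μ, a μ ^ 2) * ∑ μ, ‖v μ‖ ^ 2 := by
  set X := ∑ μ, (a μ : 𝕜) • v μ
  have ha : 0 < ∑ μ, a μ ^ 2 := (by positivity : 0 < a k ^ 2).trans_le
    (Finset.single_le_sum (fun μ _ => sq_nonneg (a μ)) (Finset.mem_univ k))
  have hv : 0 < ∑ μ, ‖v μ‖ ^ 2 := (by positivity : 0 < ‖v i‖ ^ 2).trans_le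
    (Finset.single_le_sum (fun μ _ => sq_nonneg ‖v μ‖) (Finset.mem_univ i))
  rcases eq_or_ne X 0 with hX | hX
  · rw [hX, norm_zero, sq, zero_mul]
    positivity
  obtain ⟨l, hl⟩ : ∃ l, v l ∉ 𝕜 ∙ X :=
    (notMem_span_singleton_or_notMem_span_singleton hi hj).elim (⟨i, ·⟩) (⟨j, ·⟩)
  have hXX : ‖X‖ ^ 2 = ∑ μ, a μ * re ⟪X, v μ⟫_𝕜 := by
    rw [← re_inner_sum_smul_right, inner_self_eq_norm_sq]
  have hproj : ∑ μ, re ⟪X, v μ⟫_𝕜 ^ 2 < ‖X‖ ^ 2 * ∑ μ, ‖v μ‖ ^ 2 := by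
    rw [Finset.mul_sum]
    exact Finset.sum_lt_sum (fun μ _ => re_inner_sq_le _ _)
      ⟨l, Finset.mem_univ _, re_inner_sq_lt hX hl⟩
  have hX2 : 0 < ‖X‖ ^ 2 := by positivity
  refine lt_of_mul_lt_mul_right ?_ hX2.le
  calc ‖X‖ ^ 2 * ‖X‖ ^ 2 = (∑ μ, a μ * re ⟪X, v μ⟫_𝕜) ^ 2 := by rw [← hXX, ← sq]
    _ ≤ (∑ μ, a μ ^ 2) * ∑ μ, re ⟪X, v μ⟫_𝕜 ^ 2 := Finset.sum_mul_sq_le_sq_mul_sq _ _ _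
    _ < (∑ μ, a μ ^ 2) * (‖X‖ ^ 2 * ∑ μ, ‖v μ‖ ^ 2) := mul_lt_mul_of_pos_left hproj ha
    _ = (∑ μ, a μ ^ 2) * (∑ μ, ‖v μ‖ ^ 2) * ‖X‖ ^ 2 := by ring

end GramSums

section HermitianFamily

open RCLike

variable {n ι : Type} [Fintype n] [Fintype ι]

lemma rtr_ofReal_smul (r : ℝ) (A : Matrix n n ℂ) : rtr ((r : ℂ) • A) = r * rtr A := by
  simp [rtr, trace_smul]

lemma rtr_mul_eq_re_inner {A : Matrix n n ℂ} (hA : A.IsHermitian) (B : Matrix n n ℂ) :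
    rtr (A * B) = re ⟪flattenL2 A, flattenL2 B⟫_ℂ := by
  rw [inner_flattenL2, hA.eq]
  rfl

lemma rtr_mul_self_mul_mul_self {A B : Matrix n n ℂ} (hA : A.IsHermitian) (hB : B.IsHermitian) :
    rtr (A * A * (B * B)) = ‖flattenL2 (B * A)‖ ^ 2 := by
  have htr : trace ((B * A)ᴴ * (B * A)) = trace (A * A * (B * B)) := by
    rw [conjTranspose_mul, hA.eq, hB.eq, Matrix.mul_assoc A B, trace_mul_comm A,
      trace_mul_comm (A * A)]
    simp only [Matrix.mul_assoc]
  rw [← inner_self_eq_norm_sq (𝕜 := ℂ), inner_flattenL2, htr]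
  rfl

lemma abs_rtr_mul_mul_mul_le {A B : Matrix n n ℂ} (hA : A.IsHermitian) (hB : B.IsHermitian) :
    |rtr (A * B * A * B)| ≤ ‖flattenL2 (B * A)‖ ^ 2 := by
  have h : rtr (A * B * A * B) = re ⟪flattenL2 (B * A), flattenL2 (A * B)⟫_ℂ := by
    rw [inner_flattenL2, conjTranspose_mul, hA.eq, hB.eq]
    simp only [rtr, Matrix.mul_assoc, RCLike.re_to_complex]
  have hnorm : ‖flattenL2 (A * B)‖ = ‖flattenL2 (B * A)‖ := by
    rw [← norm_flattenL2_conjTranspose, conjTranspose_mul, hA.eq, hB.eq]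
  rw [h, sq]
  exact (abs_re_le_norm _).trans ((norm_inner_le_norm _ _).trans_eq (by rw [hnorm]))

variable {R : ι → Matrix n n ℂ}

lemma alpha2_eq_sum_norm_sq (hR : ∀ μ, (R μ).IsHermitian) :
    alpha2 R = ∑ μ, ‖flattenL2 (R μ)‖ ^ 2 := by
  simp only [alpha2, rtr_mul_eq_re_inner (hR _), inner_self_eq_norm_sq]

lemma beta1_eq_sum_sum_re_inner_sq (hR : ∀ μ, (R μ).IsHermitian) :
    beta1 R = ∑ μ, ∑ ν, re ⟪flattenL2 (R μ), flattenL2 (R ν)⟫_ℂ ^ 2 := by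
  simp only [beta1, rtr_mul_eq_re_inner (hR _)]

lemma beta2_eq_norm_sq (hR : ∀ μ, (R μ).IsHermitian) :
    beta2 R = ‖∑ μ, (rtr (R μ) : ℂ) • flattenL2 (R μ)‖ ^ 2 := by
  -- `re_inner_sum_smul_right` is stated with the coercion `RCLike.ofReal`, equal to `Complex.ofReal`
  rw [← inner_self_eq_norm_sq (𝕜 := ℂ), ← RCLike.ofReal_eq_complex_ofReal,
    re_inner_sum_smul_right, beta2]
  refine Finset.sum_congr rfl fun μ _ => ?_
  rw [inner_re_symm, re_inner_sum_smul_right, Finset.mul_sum]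
  refine Finset.sum_congr rfl fun ν _ => ?_
  rw [rtr_mul_eq_re_inner (hR μ)]
  ring

lemma beta3_eq_re_inner (hR : ∀ μ, (R μ).IsHermitian) :
    beta3 R = re ⟪∑ μ, (rtr (R μ) : ℂ) • flattenL2 (R μ), ∑ ν, flattenL2 (R ν * R ν)⟫_ℂ := by
  rw [inner_re_symm, ← RCLike.ofReal_eq_complex_ofReal, re_inner_sum_smul_right, beta3]
  refine Finset.sum_congr rfl fun μ _ => ?_
  rw [inner_re_symm, inner_sum, map_sum, Finset.mul_sum]
  refine Finset.sum_congr rfl fun ν _ => ?_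
  rw [rtr_mul_eq_re_inner (hR μ)]
  ring

lemma beta4_eq_norm_sq (hR : ∀ μ, (R μ).IsHermitian) :
    beta4 R = ‖∑ ν, flattenL2 (R ν * R ν)‖ ^ 2 := by
  rw [← inner_self_eq_norm_sq (𝕜 := ℂ), sum_inner, map_sum, beta4]
  refine Finset.sum_congr rfl fun μ _ => ?_
  rw [inner_sum, map_sum]
  refine Finset.sum_congr rfl fun ν _ => ?_
  rw [inner_flattenL2, conjTranspose_mul, (hR μ).eq]
  rfl

lemma beta4_eq_sum_sum_norm_sq (hR : ∀ μ, (R μ).IsHermitian) :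
    beta4 R = ∑ μ, ∑ ν, ‖flattenL2 (R ν * R μ)‖ ^ 2 := by
  simp only [beta4, rtr_mul_self_mul_mul_self (hR _) (hR _)]

lemma abs_beta5_le_beta4 (hR : ∀ μ, (R μ).IsHermitian) : |beta5 R| ≤ beta4 R := by
  rw [beta4_eq_sum_sum_norm_sq hR, beta5]
  refine (Finset.abs_sum_le_sum_abs _ _).trans (Finset.sum_le_sum fun μ _ => ?_)
  exact (Finset.abs_sum_le_sum_abs _ _).trans
    (Finset.sum_le_sum fun ν _ => abs_rtr_mul_mul_mul_le (hR μ) (hR ν))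

lemma beta1_le_alpha2_sq (hR : ∀ μ, (R μ).IsHermitian) : beta1 R ≤ alpha2 R ^ 2 := by
  rw [beta1_eq_sum_sum_re_inner_sq hR, alpha2_eq_sum_norm_sq hR]
  exact sum_sum_re_inner_sq_le _

lemma beta1_lt_alpha2_sq (hR : ∀ μ, (R μ).IsHermitian) {i j : ι} (hi : R i ≠ 0)
    (hj : R j ∉ ℂ ∙ R i) : beta1 R < alpha2 R ^ 2 := by
  rw [beta1_eq_sum_sum_re_inner_sq hR, alpha2_eq_sum_norm_sq hR]
  exact sum_sum_re_inner_sq_lt _ (by simpa using hi)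
    (flattenL2.map_mem_span_singleton_iff.not.mpr hj)

lemma beta2_le_alpha1_mul_alpha2 (hR : ∀ μ, (R μ).IsHermitian) :
    beta2 R ≤ alpha1 R * alpha2 R := by
  rw [beta2_eq_norm_sq hR, alpha2_eq_sum_norm_sq hR, ← RCLike.ofReal_eq_complex_ofReal]
  exact norm_sum_smul_sq_le _ _

lemma beta2_lt_alpha1_mul_alpha2 (hR : ∀ μ, (R μ).IsHermitian) {i j k : ι}
    (hk : rtr (R k) ≠ 0) (hi : R i ≠ 0) (hj : R j ∉ ℂ ∙ R i) :
    beta2 R < alpha1 R * alpha2 R := by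
  rw [beta2_eq_norm_sq hR, alpha2_eq_sum_norm_sq hR, ← RCLike.ofReal_eq_complex_ofReal]
  exact norm_sum_smul_sq_lt _ _ hk (by simpa using hi)
    (flattenL2.map_mem_span_singleton_iff.not.mpr hj)

lemma beta3_sq_le_beta2_mul_beta4 (hR : ∀ μ, (R μ).IsHermitian) :
    beta3 R ^ 2 ≤ beta2 R * beta4 R := by
  rw [beta3_eq_re_inner hR, beta2_eq_norm_sq hR, beta4_eq_norm_sq hR]
  exact re_inner_sq_le _ _

lemma beta4_lt_alpha2_sq (hR : ∀ μ, (R μ).IsHermitian) {i : ι}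
    (hi : ‖flattenL2 (R i * R i)‖ < ‖flattenL2 (R i)‖ ^ 2) : beta4 R < alpha2 R ^ 2 := by
  have hle (μ ν : ι) :
      ‖flattenL2 (R ν * R μ)‖ ^ 2 ≤ ‖flattenL2 (R μ)‖ ^ 2 * ‖flattenL2 (R ν)‖ ^ 2 := by
    rw [mul_comm, ← mul_pow]
    exact pow_le_pow_left₀ (norm_nonneg _) (norm_flattenL2_mul_le _ _) 2
  have hlt : ‖flattenL2 (R i * R i)‖ ^ 2 < ‖flattenL2 (R i)‖ ^ 2 * ‖flattenL2 (R i)‖ ^ 2 := by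
    rw [← sq]
    exact pow_lt_pow_left₀ hi (norm_nonneg _) two_ne_zero
  rw [beta4_eq_sum_sum_norm_sq hR, alpha2_eq_sum_norm_sq hR, sq (∑ μ, _), Finset.sum_mul_sum]
  refine Finset.sum_lt_sum (fun μ _ => Finset.sum_le_sum fun ν _ => hle μ ν)
    ⟨i, Finset.mem_univ _, ?_⟩
  exact Finset.sum_lt_sum (fun ν _ => hle i ν) ⟨i, Finset.mem_univ _, hlt⟩

lemma sq_max_alpha_le_maxAlpha (R : ι → Matrix n n ℂ) :
    max (alpha1 R) (alpha2 R) ^ 2 ≤ maxAlpha R := by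
  rcases max_choice (alpha1 R) (alpha2 R) with h | h <;> rw [h, sq, maxAlpha]
  · exact (le_abs_self _).trans ((le_max_left _ _).trans (le_max_left _ _))
  · exact (le_abs_self _).trans ((le_max_right _ _).trans (le_max_right _ _))

end HermitianFamily

section Projection

variable {n ι : Type} [Fintype n] [Fintype ι] {P : Matrix n n ℂ} {R : ι → Matrix n n ℂ}

lemma rtr_eq_rank (hP : IsIdempotentElem P) : rtr P = P.rank := by
  simp [rtr, trace_eq_rank_of_isIdempotentElem hP]

lemma norm_flattenL2_sq_eq_rank (hP : P.IsHermitian) (hPP : IsIdempotentElem P) :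
    ‖flattenL2 P‖ ^ 2 = P.rank := by
  rw [← inner_self_eq_norm_sq (𝕜 := ℂ), inner_flattenL2, hP.eq, hPP.eq, ← rtr_eq_rank hPP]
  rfl

lemma norm_flattenL2_smul_mul_smul_lt (hP : P.IsHermitian) (hPP : IsIdempotentElem P)
    (hrank : 1 < P.rank) {c : ℂ} (hc : c ≠ 0) :
    ‖flattenL2 (c • P * (c • P))‖ < ‖flattenL2 (c • P)‖ ^ 2 := by
  have hP1 : 1 < ‖flattenL2 P‖ := by
    refine (one_lt_sq_iff₀ (norm_nonneg _)).mp ?_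
    rw [norm_flattenL2_sq_eq_rank hP hPP]
    exact_mod_cast hrank
  rw [smul_mul_smul_comm, hPP.eq, map_smul, map_smul, norm_smul, norm_smul, norm_mul, mul_pow,
    ← sq]
  exact mul_lt_mul_of_pos_left (lt_self_pow₀ hP1 one_lt_two) (by positivity)

lemma rtr_ofReal_smul_sq (hP : IsIdempotentElem P) (r : ℝ) :
    rtr ((r : ℂ) • P) ^ 2 = P.rank * rtr ((r : ℂ) • P * ((r : ℂ) • P)) := by
  rw [smul_mul_smul_comm, hP.eq, ← Complex.ofReal_mul, rtr_ofReal_smul, rtr_ofReal_smul,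
    rtr_eq_rank hP]
  ring

lemma alpha1_eq_rank_mul_alpha2 (hR : ∀ μ, (R μ).IsHermitian)
    (hP : P.IsHermitian) (hPP : IsIdempotentElem P) (hP0 : P ≠ 0) (h : ∀ μ, R μ ∈ ℂ ∙ P) :
    alpha1 R = P.rank * alpha2 R := by
  rw [alpha1, alpha2, Finset.mul_sum]
  refine Finset.sum_congr rfl fun μ _ => ?_
  obtain ⟨c, hc⟩ := Submodule.mem_span_singleton.mp (h μ)
  obtain ⟨r, rfl⟩ := exists_ofReal_of_isHermitian_smul hP hP0 (hc ▸ hR μ)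
  rw [← hc, rtr_ofReal_smul_sq hPP]

lemma alpha2_pos (hR : ∀ μ, (R μ).IsHermitian) {i : ι} (hi : R i ≠ 0) : 0 < alpha2 R := by
  have hi' : flattenL2 (R i) ≠ 0 := by simpa using hi
  rw [alpha2_eq_sum_norm_sq hR]
  exact (by positivity : 0 < ‖flattenL2 (R i)‖ ^ 2).trans_le
    (Finset.single_le_sum (fun μ _ => sq_nonneg ‖flattenL2 (R μ)‖) (Finset.mem_univ i))

lemma beta1_lt_and_beta2_lt_sq_max (hR : ∀ μ, (R μ).IsHermitian) (hP : P.IsHermitian)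
    (hPP : IsIdempotentElem P) (hrank : 1 < P.rank) {μ₀ : ι} {c : ℝ} (hc : c ≠ 0)
    (hR₀ : R μ₀ = (c : ℂ) • P) :
    beta1 R < max (alpha1 R) (alpha2 R) ^ 2 ∧ beta2 R < max (alpha1 R) (alpha2 R) ^ 2 := by
  have hP0 := ne_zero_of_one_lt_rank hrank
  have hR₀ne : R μ₀ ≠ 0 := hR₀ ▸ smul_ne_zero (by simpa using hc) hP0
  have hα₂ := alpha2_pos hR hR₀ne
  by_cases hdeg : ∀ μ, R μ ∈ ℂ ∙ P
  · have hlt : alpha2 R < alpha1 R := by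
      rw [alpha1_eq_rank_mul_alpha2 hR hP hPP hP0 hdeg]
      exact lt_mul_of_one_lt_left hα₂ (by exact_mod_cast hrank)
    rw [max_eq_left hlt.le, sq]
    exact ⟨(beta1_le_alpha2_sq hR).trans_lt (by rw [sq]; exact mul_self_lt_mul_self hα₂.le hlt),
      (beta2_le_alpha1_mul_alpha2 hR).trans_lt (mul_lt_mul_of_pos_left hlt (hα₂.trans hlt))⟩
  · obtain ⟨μ, hμ⟩ := not_forall.mp hdeg
    have hμ₀ : R μ ∉ ℂ ∙ R μ₀ := by
      rwa [hR₀, Submodule.span_singleton_smul_eq (by simpa using hc)]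
    have htr : rtr (R μ₀) ≠ 0 := by
      rw [hR₀, rtr_ofReal_smul, rtr_eq_rank hPP]
      exact mul_ne_zero hc (by positivity)
    refine ⟨(beta1_lt_alpha2_sq hR hR₀ne hμ₀).trans_le
      (pow_le_pow_left₀ hα₂.le (le_max_right _ _) 2), ?_⟩
    refine (beta2_lt_alpha1_mul_alpha2 hR htr hR₀ne hμ₀).trans_le ?_
    rw [sq]
    exact mul_le_mul (le_max_left _ _) (le_max_right _ _) hα₂.le (hα₂.le.trans (le_max_right _ _))

theorem maxBeta_lt_maxAlpha (hR : ∀ μ, (R μ).IsHermitian) (hP : P.IsHermitian)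
    (hPP : IsIdempotentElem P) (hrank : 1 < P.rank) {μ₀ : ι} {c : ℝ} (hc : c ≠ 0)
    (hR₀ : R μ₀ = (c : ℂ) • P) : maxBeta R < maxAlpha R := by
  have hR₀ne : R μ₀ ≠ 0 := hR₀ ▸ smul_ne_zero (by simpa using hc) (ne_zero_of_one_lt_rank hrank)
  have hα₂ := alpha2_pos hR hR₀ne
  set M := max (alpha1 R) (alpha2 R)
  have hM : 0 < M ^ 2 := pow_pos (hα₂.trans_le (le_max_right _ _)) 2
  obtain ⟨hβ₁, hβ₂⟩ := beta1_lt_and_beta2_lt_sq_max hR hP hPP hrank hc hR₀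
  have hβ₄ : beta4 R < M ^ 2 := by
    refine (beta4_lt_alpha2_sq hR (i := μ₀) ?_).trans_le
      (pow_le_pow_left₀ hα₂.le (le_max_right _ _) 2)
    rw [hR₀]
    exact norm_flattenL2_smul_mul_smul_lt hP hPP hrank (by simpa using hc)
  have hβ₂₀ : 0 ≤ beta2 R := by rw [beta2_eq_norm_sq hR]; positivity
  have hβ₄₀ : 0 ≤ beta4 R := by rw [beta4_eq_norm_sq hR]; positivity
  have hβ₃ : |beta3 R| < M ^ 2 := by
    refine abs_lt_of_sq_lt_sq ?_ hM.le
    calc beta3 R ^ 2 ≤ beta2 R * beta4 R := beta3_sq_le_beta2_mul_beta4 hR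
      _ < M ^ 2 * M ^ 2 := mul_lt_mul'' hβ₂ hβ₄ hβ₂₀ hβ₄₀
      _ = (M ^ 2) ^ 2 := by ring
  refine lt_of_lt_of_le ?_ (sq_max_alpha_le_maxAlpha R)
  simp only [maxBeta, max_lt_iff]
  refine ⟨?_, by rwa [abs_of_nonneg hβ₂₀], hβ₃, by rwa [abs_of_nonneg hβ₄₀],
    (abs_beta5_le_beta4 hR).trans_lt hβ₄⟩
  rwa [abs_of_nonneg (Finset.sum_nonneg fun _ _ => Finset.sum_nonneg fun _ _ => sq_nonneg _)]

end Projection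

theorem max_beta_lt_max_alpha_of_channel {d_A : ℕ} (hdA : 0 < d_A) {J : Type} [Fintype J]
    (K : J → Matrix (Fin d_A) (Fin d_A) ℂ)
    (hK : ∑ i, (K i)ᴴ * K i = 1)
    (σ : Fin (d_A * d_A) → Matrix (Fin d_A) (Fin d_A) ℂ)
    (hσHerm : ∀ μ, (σ μ).IsHermitian)
    (hσ0 : σ ⟨0, Nat.mul_pos hdA hdA⟩ = ((Real.sqrt d_A : ℂ))⁻¹ • (1 : Matrix (Fin d_A) (Fin d_A) ℂ))
    (P : Matrix (Fin d_A) (Fin d_A) ℂ) (hPHerm : P.IsHermitian) (hPproj : P * P = P)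
    (d_S : ℕ) (hPrank : P.rank = d_S) (hdS : 1 < d_S) :
    maxBeta (fun μ => P * (∑ i, (K i)ᴴ * σ μ * K i) * P) <
      maxAlpha (fun μ => P * (∑ i, (K i)ᴴ * σ μ * K i) * P) := by
  have hR (μ) : (P * (∑ i, (K i)ᴴ * σ μ * K i) * P).IsHermitian := by
    have hQ : (∑ i, (K i)ᴴ * σ μ * K i).IsHermitian :=
      isSelfAdjoint_sum _ fun i _ => isHermitian_conjTranspose_mul_mul (K i) (hσHerm μ)
    simpa only [hPHerm.eq] using isHermitian_conjTranspose_mul_mul P hQ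
  have hR₀ : P * (∑ i, (K i)ᴴ * σ ⟨0, Nat.mul_pos hdA hdA⟩ * K i) * P
      = (((Real.sqrt d_A)⁻¹ : ℝ) : ℂ) • P := by
    simp only [hσ0, Matrix.mul_smul, Matrix.smul_mul, Matrix.mul_one, ← Finset.smul_sum, hK,
      hPproj, Complex.ofReal_inv]
  exact maxBeta_lt_maxAlpha hR hPHerm hPproj (hPrank ▸ hdS) (by positivity) hR₀
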